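/- Let γ > 2 and F_γ : L¹(ℝ) → ℝ ∪ {+∞}, F_γ(m) = ‖m̂ − exp‖²_{L²_γ} on its domain. For any α > 0 and m ∈ L¹(ℝ), defining m_α(x) := α^{-1-ix} m(x), one has F_γ(m_α) = α^{γ-2} F_γ(m). -/

import Mathlib

open MeasureTheory Complex
open scoped ENNReal

noncomputable def FT (f : ℝ → ℂ) : ℝ → ℂ :=
  fun k => ∫ x : ℝ, f x * Complex.exp (-Complex.I * k * x)

/-- `F_γ(m) = ‖m̂ − exp‖²_{L²_γ}` as an extended-real-valued functional. -/
noncomputable def Fgamma (γ : ℝ) (m : ℝ → ℂ) : ℝ≥0∞ :=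
  ∫⁻ k : ℝ, (‖FT m k - Real.exp k‖₊ : ℝ≥0∞) ^ 2 * ENNReal.ofReal (Real.exp (-γ * k))

/-!
With `L = log α`, the map `m ↦ m_α` is multiplication by the constant `e^{-L}` followed by the
modulation `x ↦ e^{-iLx}`, so `m̂_α(k) = e^{-L} m̂(k + L)`. Since also `e^k = e^{-L} e^{k + L}`,
the integrand of `F_γ(m_α)` at `k` is `e^{-2L} e^{-γk} = e^{(γ-2)L} e^{-γ(k+L)}` times
`|m̂(k + L) - e^{k+L}|²`, and translation invariance of Lebesgue measure finishes the proof.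
-/

theorem FT_const_mul (c : ℂ) (f : ℝ → ℂ) (k : ℝ) :
    FT (fun x => c * f x) k = c * FT f k := by
  simp only [FT, mul_assoc, integral_const_mul]

theorem FT_cexp_mul (L : ℝ) (f : ℝ → ℂ) (k : ℝ) :
    FT (fun x => cexp (-I * L * x) * f x) k = FT f (k + L) := by
  simp only [FT]
  congr 1
  ext x
  rw [mul_comm (cexp _), mul_assoc, ← Complex.exp_add]
  push_cast
  ring_nf

theorem FT_sub_exp_of_scaled (L : ℝ) (m : ℝ → ℂ) (k : ℝ) :
    FT (fun x : ℝ => cexp ((-1 - I * x) * L) * m x) k - Real.exp k =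
      Real.exp (-L) * (FT m (k + L) - Real.exp (k + L)) := by
  have hsplit : (fun x : ℝ => cexp ((-1 - I * x) * L) * m x) =
      fun x : ℝ => (Real.exp (-L) : ℂ) * (cexp (-I * L * x) * m x) := by
    ext x
    rw [Complex.ofReal_exp, ← mul_assoc, ← Complex.exp_add]
    push_cast
    ring_nf
  rw [hsplit, FT_const_mul, FT_cexp_mul, mul_sub, ← Complex.ofReal_mul, ← Real.exp_add,
    neg_add_cancel_comm_assoc]

theorem enorm_exp_mul_sq_mul_weight (γ L k : ℝ) (z : ℂ) :
    (‖(Real.exp (-L) : ℂ) * z‖₊ : ℝ≥0∞) ^ 2 * ENNReal.ofReal (Real.exp (-γ * k)) =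
      ENNReal.ofReal (Real.exp ((γ - 2) * L)) *
        ((‖z‖₊ : ℝ≥0∞) ^ 2 * ENNReal.ofReal (Real.exp (-γ * (k + L)))) := by
  have hsq : ∀ w : ℂ, (‖w‖₊ : ℝ≥0∞) ^ 2 = ENNReal.ofReal (‖w‖ ^ 2) := fun w => by
    rw [ENNReal.ofReal_pow (norm_nonneg w), ofReal_norm, enorm_eq_nnnorm]
  rw [hsq, hsq, ← ENNReal.ofReal_mul (by positivity), ← ENNReal.ofReal_mul (by positivity),
    ← ENNReal.ofReal_mul (by positivity), norm_mul, Complex.norm_real,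
    Real.norm_of_nonneg (Real.exp_pos _).le]
  congr 1
  calc (Real.exp (-L) * ‖z‖) ^ 2 * Real.exp (-γ * k)
      = Real.exp (2 * -L + -γ * k) * ‖z‖ ^ 2 := by
        rw [two_mul, Real.exp_add, Real.exp_add]; ring
    _ = Real.exp ((γ - 2) * L + -γ * (k + L)) * ‖z‖ ^ 2 := by ring_nf
    _ = Real.exp ((γ - 2) * L) * (‖z‖ ^ 2 * Real.exp (-γ * (k + L))) := by
        rw [Real.exp_add]; ring

theorem Fgamma_scaled (γ L : ℝ) (m : ℝ → ℂ) :
    Fgamma γ (fun x : ℝ => cexp ((-1 - I * x) * L) * m x) =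
      ENNReal.ofReal (Real.exp ((γ - 2) * L)) * Fgamma γ m := by
  simp only [Fgamma, FT_sub_exp_of_scaled, enorm_exp_mul_sq_mul_weight]
  rw [lintegral_const_mul' _ _ ENNReal.ofReal_ne_top, lintegral_add_right_eq_self
    (fun k => (‖FT m k - Real.exp k‖₊ : ℝ≥0∞) ^ 2 * ENNReal.ofReal (Real.exp (-γ * k))) L]

theorem Fgamma_scaling_general (γ : ℝ) (α : ℝ) (hα : 0 < α)
    (m : ℝ → ℂ) :
    Fgamma γ (fun x : ℝ => Complex.exp ((-1 - Complex.I * x) * Real.log α) * m x) =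
      ENNReal.ofReal (α ^ (γ - 2)) * Fgamma γ m := by
  rw [Fgamma_scaled, Real.rpow_def_of_pos hα, mul_comm (Real.log α)]

theorem Fgamma_scaling (γ : ℝ) (hγ : 2 < γ) (α : ℝ) (hα : 0 < α)
    (m : ℝ → ℂ) (hm : Integrable m) :
    Fgamma γ (fun x : ℝ => Complex.exp ((-1 - Complex.I * x) * Real.log α) * m x) =
      ENNReal.ofReal (α ^ (γ - 2)) * Fgamma γ m :=
  Fgamma_scaling_general γ α hα m
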